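/- The kernel of the operator (L,B) has the same (finite) dimension as the kernel of the characteristic matrix M(L,B) ∈ ℂ^{r×m}, whose j-th column equals B applied to the j-th column of the fundamental matrix Y. -/

import Mathlib

open MeasureTheory Set Filter Topology intervalIntegral
open scoped ENNReal NNReal Matrix

noncomputable section

/-- Membership in the Sobolev space `W_p^n([a,b];ℂ)`: for `n ≥ 1`, `y ∈ C^{n-1}` on `[a,b]`,
`y^{(n-1)}` is absolutely continuous with a.e. derivative `g ∈ L_p`; `W_p^0 = L_p`. -/
def MemW (p : ℝ≥0∞) (n : ℕ) (a b : ℝ) (y : ℝ → ℂ) : Prop :=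
  match n with
  | 0 => MemLp y p (volume.restrict (Set.Icc a b))
  | Nat.succ k =>
      ContDiffOn ℝ k y (Set.Icc a b) ∧
      ∃ g : ℝ → ℂ, MemLp g p (volume.restrict (Set.Icc a b)) ∧
        ∀ t ∈ Set.Icc a b,
          iteratedDerivWithin k y (Set.Icc a b) t
            = iteratedDerivWithin k y (Set.Icc a b) a + ∫ s in a..t, g s

/-- The Sobolev norm `‖y‖_{n,p} = ∑_{k=0}^{n} ‖y^{(k)}‖_p` on `[a,b]`. -/
def WNorm (p : ℝ≥0∞) (n : ℕ) (a b : ℝ) (y : ℝ → ℂ) : ℝ :=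
  ∑ k ∈ Finset.range (n + 1),
    (eLpNorm (iteratedDerivWithin k y (Set.Icc a b)) p (volume.restrict (Set.Icc a b))).toReal

/-- Componentwise membership in `(W_p^n)^m`. -/
def VMemW (p : ℝ≥0∞) (n : ℕ) (a b : ℝ) {m : ℕ} (y : ℝ → Fin m → ℂ) : Prop :=
  ∀ i, MemW p n a b (fun t => y t i)

/-- Norm on `(W_p^n)^m` (sum of component norms, an equivalent norm). -/
def VNorm (p : ℝ≥0∞) (n : ℕ) (a b : ℝ) {m : ℕ} (y : ℝ → Fin m → ℂ) : ℝ :=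
  ∑ i, WNorm p n a b (fun t => y t i)

/-- Entrywise membership in `(W_p^n)^{m×m}`. -/
def MMemW (p : ℝ≥0∞) (n : ℕ) (a b : ℝ) {m : ℕ} (A : ℝ → Matrix (Fin m) (Fin m) ℂ) : Prop :=
  ∀ i j, MemW p n a b (fun t => A t i j)

/-- Norm on `(W_p^n)^{m×m}`. -/
def MNorm (p : ℝ≥0∞) (n : ℕ) (a b : ℝ) {m : ℕ} (A : ℝ → Matrix (Fin m) (Fin m) ℂ) : ℝ :=
  ∑ i, ∑ j, WNorm p n a b (fun t => A t i j)

/-- `y` solves `y' + A y = f` on `[a,b]` (a.e.; everywhere for `n ≥ 2`), in integral form: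
`y(t) = y(a) + ∫_a^t (f(s) - A(s) y(s)) ds`. -/
def Solves (a b : ℝ) {m : ℕ} (A : ℝ → Matrix (Fin m) (Fin m) ℂ)
    (f y : ℝ → Fin m → ℂ) : Prop :=
  ∀ t ∈ Set.Icc a b, ∀ i, y t i = y a i + ∫ s in a..t, (f s i - (A s *ᵥ y s) i)

/-- The differential expression `(Ly)(t) = y'(t) + A(t) y(t)` on `[a,b]`. -/
def Lop (a b : ℝ) {m : ℕ} (A : ℝ → Matrix (Fin m) (Fin m) ℂ)
    (y : ℝ → Fin m → ℂ) : ℝ → Fin m → ℂ :=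
  fun t i => derivWithin (fun s => y s i) (Set.Icc a b) t + (A t *ᵥ y t) i

/-- `B : (W_p^n)^m → ℂ^r` is linear and bounded w.r.t. the Sobolev norm. -/
def IsBddLin (p : ℝ≥0∞) (n : ℕ) (a b : ℝ) {m r : ℕ}
    (B : (ℝ → Fin m → ℂ) → (Fin r → ℂ)) : Prop :=
  (∀ y z, B (y + z) = B y + B z) ∧ (∀ (c : ℂ) y, B (c • y) = c • B y) ∧
  ∃ K : ℝ, ∀ y, VMemW p n a b y → ‖B y‖ ≤ K * VNorm p n a b y

/-- The characteristic matrix `M(L,B) ∈ ℂ^{r×m}`: its `j`-th column is `B` applied to the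
`j`-th column of the fundamental matrix `Y`. -/
def charM {m r : ℕ} (B : (ℝ → Fin m → ℂ) → (Fin r → ℂ))
    (Y : ℝ → Matrix (Fin m) (Fin m) ℂ) : Matrix (Fin r) (Fin m) ℂ :=
  Matrix.of fun i j => B (fun t k => Y t k j) i

/-- `Y` is the fundamental matrix: `Y' + A Y = 0`, `Y(a) = I`, in integral (entrywise) form. -/
def IsFund (a b : ℝ) {m : ℕ} (A Y : ℝ → Matrix (Fin m) (Fin m) ℂ) : Prop :=
  Y a = 1 ∧ ∀ t ∈ Set.Icc a b, ∀ i j,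
    Y t i j = (1 : Matrix (Fin m) (Fin m) ℂ) i j - ∫ s in a..t, (A s * Y s) i j

/-- The kernel of `(L,B)` has dimension `d`. -/
def KerDim (p : ℝ≥0∞) (n : ℕ) (a b : ℝ) {m r : ℕ}
    (A : ℝ → Matrix (Fin m) (Fin m) ℂ) (B : (ℝ → Fin m → ℂ) → (Fin r → ℂ)) (d : ℕ) : Prop :=
  ∃ φ : Fin d → (ℝ → Fin m → ℂ),
    (∀ i, VMemW p n a b (φ i) ∧ Solves a b A 0 (φ i) ∧ B (φ i) = 0) ∧
    LinearIndependent ℂ (fun i => fun tc : Set.Icc a b => φ i tc) ∧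
    ∀ y, VMemW p n a b y → Solves a b A 0 y → B y = 0 →
      ∃ c : Fin d → ℂ, ∀ t ∈ Set.Icc a b, y t = ∑ i, c i • φ i t

/-- `(f,c)` lies in the range of `(L,B)`. -/
def InRange (p : ℝ≥0∞) (n : ℕ) (a b : ℝ) {m r : ℕ}
    (A : ℝ → Matrix (Fin m) (Fin m) ℂ) (B : (ℝ → Fin m → ℂ) → (Fin r → ℂ))
    (w : (ℝ → Fin m → ℂ) × (Fin r → ℂ)) : Prop :=
  ∃ y, VMemW p n a b y ∧ Solves a b A w.1 y ∧ B y = w.2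

/-- The cokernel of `(L,B)` (in `(W_p^{n-1})^m × ℂ^r`) has dimension `d`. -/
def CokerDim (p : ℝ≥0∞) (n : ℕ) (a b : ℝ) {m r : ℕ}
    (A : ℝ → Matrix (Fin m) (Fin m) ℂ) (B : (ℝ → Fin m → ℂ) → (Fin r → ℂ)) (d : ℕ) : Prop :=
  ∃ v : Fin d → (ℝ → Fin m → ℂ) × (Fin r → ℂ),
    (∀ i, VMemW p (n - 1) a b (v i).1) ∧
    (∀ c : Fin d → ℂ, InRange p n a b A B (∑ i, c i • v i) → c = 0) ∧
    ∀ w : (ℝ → Fin m → ℂ) × (Fin r → ℂ), VMemW p (n - 1) a b w.1 →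
      ∃ c : Fin d → ℂ, InRange p n a b A B (w - ∑ i, c i • v i)

/-! A solution of `y' + A y = 0` is determined by its value at `a`: the difference `z` of two
solutions with the same initial value satisfies `h t ≤ ∫ a..t, g * h` for `h = ∑ |zᵢ|` and
the integrable weight `g = ∑ |Aᵢⱼ|`, which forces `h = 0` (Grönwall). Hence `c ↦ Y c` is a
linear bijection from `ℂ^m` onto the solutions, and since `B (Y c) = M(L,B) c` it maps
`ker M(L,B)` onto `ker (L,B)`; a bounded `B` only sees functions through their values on
`[a,b]`. -/

theorem MeasureTheory.IntegrableOn.intervalIntegrable_of_mem_Icc {E : Type*}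
    [NormedAddCommGroup E] {a b : ℝ} {f : ℝ → E} (hf : IntegrableOn f (Icc a b)) {u v : ℝ}
    (hu : u ∈ Icc a b) (hv : v ∈ Icc a b) : IntervalIntegrable f volume u v :=
  (hf.mono_set (uIcc_subset_Icc hu hv)).intervalIntegrable

section SobolevSpace

variable {p : ℝ≥0∞} {n : ℕ} {a b : ℝ}

theorem MemW.integrableOn (hp : 1 ≤ p) {f : ℝ → ℂ} (hf : MemW p n a b f) :
    IntegrableOn f (Icc a b) := by
  cases n with
  | zero => exact hf.integrable hp
  | succ k => exact hf.1.continuousOn.integrableOn_Icc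

theorem MemW.continuousOn (hn : n ≠ 0) {f : ℝ → ℂ} (hf : MemW p n a b f) :
    ContinuousOn f (Icc a b) := by
  cases n with
  | zero => exact absurd rfl hn
  | succ k => exact hf.1.continuousOn

theorem memW_zero : MemW p n a b 0 := by
  cases n with
  | zero => exact MemLp.zero
  | succ k => exact ⟨contDiffOn_const, 0, MemLp.zero, fun t _ => by simp⟩

theorem MemW.const_smul (hab : a < b) (c : ℂ) {f : ℝ → ℂ} (hf : MemW p n a b f) :
    MemW p n a b (c • f) := by
  cases n with
  | zero => exact hf.const_smul c
  | succ k =>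
    obtain ⟨hfk, g, hg, hfg⟩ := hf
    have hderiv : ∀ x ∈ Icc a b, iteratedDerivWithin k (c • f) (Icc a b) x
        = c * iteratedDerivWithin k f (Icc a b) x := fun x hx =>
      iteratedDerivWithin_const_smul hx (uniqueDiffOn_Icc hab) c (hfk x hx)
    refine ⟨hfk.const_smul c, c • g, hg.const_smul c, fun t ht => ?_⟩
    rw [hderiv t ht, hderiv a (left_mem_Icc.2 hab.le), hfg t ht, mul_add,
      ← intervalIntegral.integral_const_mul]
    rfl

theorem MemW.add (hab : a < b) (hp : 1 ≤ p) {f g : ℝ → ℂ} (hf : MemW p n a b f)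
    (hg : MemW p n a b g) : MemW p n a b (f + g) := by
  cases n with
  | zero => exact MemLp.add hf hg
  | succ k =>
    obtain ⟨hfk, u, hu, hfu⟩ := hf
    obtain ⟨hgk, v, hv, hgv⟩ := hg
    have ha : a ∈ Icc a b := left_mem_Icc.2 hab.le
    have hderiv : ∀ x ∈ Icc a b, iteratedDerivWithin k (f + g) (Icc a b) x
        = iteratedDerivWithin k f (Icc a b) x + iteratedDerivWithin k g (Icc a b) x :=
      fun x hx => iteratedDerivWithin_add hx (uniqueDiffOn_Icc hab) (hfk x hx) (hgk x hx)
    refine ⟨hfk.add hgk, u + v, hu.add hv, fun t ht => ?_⟩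
    have hu' := IntegrableOn.intervalIntegrable_of_mem_Icc (hu.integrable hp) ha ht
    have hv' := IntegrableOn.intervalIntegrable_of_mem_Icc (hv.integrable hp) ha ht
    rw [hderiv t ht, hderiv a ha, hfu t ht, hgv t ht, Pi.add_def,
      intervalIntegral.integral_add hu' hv']
    ring

variable (p n) in
def vMemWSubmodule (hab : a < b) (hp : 1 ≤ p) (m : ℕ) : Submodule ℂ (ℝ → Fin m → ℂ) where
  carrier := {y | VMemW p n a b y}
  zero_mem' _ := memW_zero
  add_mem' hy hz i := (hy i).add hab hp (hz i)
  smul_mem' c _ hy i := (hy i).const_smul hab c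

theorem wNorm_eq_zero_of_eqOn_zero {f : ℝ → ℂ} (hf : EqOn f 0 (Icc a b)) :
    WNorm p n a b f = 0 := by
  refine Finset.sum_eq_zero fun k _ => ?_
  have hderiv : iteratedDerivWithin k f (Icc a b) =ᵐ[volume.restrict (Icc a b)] 0 := by
    refine (ae_restrict_iff' measurableSet_Icc).2 (ae_of_all _ fun x hx => ?_)
    rw [iteratedDerivWithin_congr hf hx]
    simp
  rw [eLpNorm_congr_ae hderiv, eLpNorm_zero, ENNReal.toReal_zero]

theorem vNorm_eq_zero_of_eqOn_zero {m : ℕ} {y : ℝ → Fin m → ℂ} (hy : EqOn y 0 (Icc a b)) :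
    VNorm p n a b y = 0 :=
  Finset.sum_eq_zero fun i _ =>
    wNorm_eq_zero_of_eqOn_zero fun _ ht => congrFun (hy ht) i

end SobolevSpace

namespace IsBddLin

variable {p : ℝ≥0∞} {n : ℕ} {a b : ℝ} {m r : ℕ} {B : (ℝ → Fin m → ℂ) → (Fin r → ℂ)}

def toLinearMap (hB : IsBddLin p n a b B) : (ℝ → Fin m → ℂ) →ₗ[ℂ] (Fin r → ℂ) where
  toFun := B
  map_add' := hB.1
  map_smul' := hB.2.1

theorem apply_eq_of_eqOn (hB : IsBddLin p n a b B) (hab : a < b) (hp : 1 ≤ p)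
    {y z : ℝ → Fin m → ℂ} (hy : VMemW p n a b y) (hz : VMemW p n a b z)
    (hyz : EqOn y z (Icc a b)) : B y = B z := by
  obtain ⟨K, hK⟩ := hB.2.2
  have hsub : VMemW p n a b (y - z) := (vMemWSubmodule p n hab hp m).sub_mem hy hz
  have hvanish : EqOn (y - z) 0 (Icc a b) := fun t ht => sub_eq_zero.2 (hyz ht)
  have hnorm := hK _ hsub
  rw [vNorm_eq_zero_of_eqOn_zero hvanish, mul_zero, norm_le_zero_iff] at hnorm
  rw [← sub_eq_zero, ← hnorm]
  exact (map_sub hB.toLinearMap y z).symm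

end IsBddLin

section Gronwall

variable {a b : ℝ}

theorem eqOn_zero_of_le_integral_mul {g h : ℝ → ℝ} (hg : IntegrableOn g (Icc a b))
    (hg0 : 0 ≤ g) (hh : ContinuousOn h (Icc a b)) (hh0 : 0 ≤ h)
    (hle : ∀ t ∈ Icc a b, h t ≤ ∫ s in a..t, g s * h s) : EqOn h 0 (Icc a b) := by
  set F : ℝ → ℝ := fun t => ∫ s in a..t, g s * h s
  have hgh : IntegrableOn (fun s => g s * h s) (Icc a b) := hg.mul_continuousOn hh isCompact_Icc
  have hF_add : ∀ u ∈ Icc a b, ∀ v ∈ Icc a b, F v = F u + ∫ s in u..v, g s * h s :=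
    fun u hu v hv => (intervalIntegral.integral_add_adjacent_intervals
      (hgh.intervalIntegrable_of_mem_Icc (left_mem_Icc.2 (hu.1.trans hu.2)) hu)
      (hgh.intervalIntegrable_of_mem_Icc hu hv)).symm
  have hF_mono : MonotoneOn F (Icc a b) := fun u hu v hv huv => by
    rw [hF_add u hu v hv, le_add_iff_nonneg_right]
    exact intervalIntegral.integral_nonneg huv fun s _ => mul_nonneg (hg0 s) (hh0 s)
  have hF_cont : ContinuousOn F (Icc a b) := by
    rcases lt_or_ge b a with hba | hab
    · simp [Icc_eq_empty_of_lt hba]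
    · rw [← uIcc_of_le hab] at hgh ⊢
      exact intervalIntegral.continuousOn_primitive_interval hgh
  -- Real induction: once `F x = 0`, monotonicity of `F` gives `F t ≤ (∫ s in x..t, g s) * F t`,
  -- and this factor is `< 1` for `t` close to `x` on the right.
  have hF_zero : Icc a b ⊆ F ⁻¹' {0} := by
    refine IsClosed.Icc_subset_of_forall_mem_nhdsWithin ?_ (by simp [F]) ?_
    · rw [inter_comm]
      exact hF_cont.preimage_isClosed_of_isClosed isClosed_Icc isClosed_singleton
    rintro x ⟨hFx, hxa, hxb⟩
    have hx : x ∈ Icc a b := ⟨hxa, hxb.le⟩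
    have hG : Tendsto (fun t => ∫ s in x..t, g s) (𝓝[>] x) (𝓝 0) := by
      have hcont := intervalIntegral.continuousOn_primitive_interval (f := g) (a := x) (b := b)
        (hg.mono_set (uIcc_subset_Icc hx (right_mem_Icc.2 (hxa.trans hxb.le))))
      have := (hcont x left_mem_uIcc).tendsto
      rw [intervalIntegral.integral_same] at this
      exact this.mono_left (nhdsWithin_le_of_mem (by
        rw [uIcc_of_le hxb.le]; exact Icc_mem_nhdsGT hxb))
    filter_upwards [hG.eventually (gt_mem_nhds one_pos), Ioo_mem_nhdsGT hxb] with t hGt ht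
    have ht' : t ∈ Icc a b := ⟨hxa.trans ht.1.le, ht.2.le⟩
    have hFt0 : 0 ≤ F t := by
      simpa [show F x = 0 from hFx] using hF_mono hx ht' ht.1.le
    have hFt : F t ≤ (∫ s in x..t, g s) * F t := calc
      F t = ∫ s in x..t, g s * h s := by
        rw [hF_add x hx t ht', show F x = 0 from hFx, zero_add]
      _ ≤ ∫ s in x..t, g s * F t := by
        refine intervalIntegral.integral_mono_on ht.1.le
          (hgh.intervalIntegrable_of_mem_Icc hx ht')
          ((hg.intervalIntegrable_of_mem_Icc hx ht').mul_const _) fun s hs => ?_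
        have hs' : s ∈ Icc a b := ⟨hxa.trans hs.1, hs.2.trans ht'.2⟩
        exact mul_le_mul_of_nonneg_left ((hle s hs').trans (hF_mono hs' ht' hs.2)) (hg0 s)
      _ = (∫ s in x..t, g s) * F t := intervalIntegral.integral_mul_const _ _
    show F t = 0
    nlinarith
  intro t ht
  exact le_antisymm ((hle t ht).trans_eq (hF_zero ht)) (hh0 t)

end Gronwall

section LinearSystem

variable {a b : ℝ} {m : ℕ} {A : ℝ → Matrix (Fin m) (Fin m) ℂ}

theorem sum_norm_mulVec_le {ι κ : Type*} [Fintype ι] [Fintype κ] (M : Matrix ι κ ℂ)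
    (v : κ → ℂ) : ∑ i, ‖(M *ᵥ v) i‖ ≤ (∑ i, ∑ j, ‖M i j‖) * ∑ j, ‖v j‖ := by
  rw [Finset.sum_mul]
  refine Finset.sum_le_sum fun i _ => ?_
  calc ‖(M *ᵥ v) i‖ ≤ ∑ j, ‖M i j‖ * ‖v j‖ := (norm_sum_le _ _).trans_eq (by simp)
    _ ≤ ∑ j, ‖M i j‖ * ∑ k, ‖v k‖ := Finset.sum_le_sum fun j _ =>
        mul_le_mul_of_nonneg_left (Finset.single_le_sum (fun k _ => norm_nonneg (v k))
          (Finset.mem_univ j)) (norm_nonneg _)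
    _ = (∑ j, ‖M i j‖) * ∑ k, ‖v k‖ := (Finset.sum_mul ..).symm

theorem integrableOn_mulVec_apply (hA : ∀ i j, IntegrableOn (fun s => A s i j) (Icc a b))
    {z : ℝ → Fin m → ℂ} (hz : ∀ j, ContinuousOn (fun s => z s j) (Icc a b)) (i : Fin m) :
    IntegrableOn (fun s => (A s *ᵥ z s) i) (Icc a b) :=
  show IntegrableOn (fun s => ∑ j, A s i j * z s j) (Icc a b) volume from
  integrable_finsetSum _ fun j _ => (hA i j).mul_continuousOn (hz j) isCompact_Icc

theorem solves_zero_iff {y : ℝ → Fin m → ℂ} :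
    Solves a b A 0 y ↔ ∀ t ∈ Icc a b, ∀ i, y t i = y a i - ∫ s in a..t, (A s *ᵥ y s) i := by
  simp [Solves, intervalIntegral.integral_neg, sub_eq_add_neg]

theorem Solves.eqOn_zero (hA : ∀ i j, IntegrableOn (fun s => A s i j) (Icc a b))
    {z : ℝ → Fin m → ℂ} (hz : ∀ i, ContinuousOn (fun t => z t i) (Icc a b))
    (hsol : Solves a b A 0 z) (hza : z a = 0) : EqOn z 0 (Icc a b) := by
  set g : ℝ → ℝ := fun s => ∑ i, ∑ j, ‖A s i j‖
  set h : ℝ → ℝ := fun t => ∑ i, ‖z t i‖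
  have hAz := integrableOn_mulVec_apply hA hz
  have hg : IntegrableOn g (Icc a b) :=
    integrable_finsetSum _ fun i _ => integrable_finsetSum _ fun j _ => (hA i j).norm
  have hh : ContinuousOn h (Icc a b) := continuousOn_finsetSum _ fun i _ => (hz i).norm
  have hle : ∀ t ∈ Icc a b, h t ≤ ∫ s in a..t, g s * h s := fun t ht => by
    have ha : a ∈ Icc a b := ⟨le_rfl, ht.1.trans ht.2⟩
    calc h t = ∑ i, ‖∫ s in a..t, (A s *ᵥ z s) i‖ := Finset.sum_congr rfl fun i _ => by
          rw [solves_zero_iff.1 hsol t ht i, hza, Pi.zero_apply, zero_sub, norm_neg]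
      _ ≤ ∑ i, ∫ s in a..t, ‖(A s *ᵥ z s) i‖ := Finset.sum_le_sum fun i _ =>
          intervalIntegral.norm_integral_le_integral_norm ht.1
      _ = ∫ s in a..t, ∑ i, ‖(A s *ᵥ z s) i‖ :=
          (intervalIntegral.integral_finsetSum fun i _ =>
            IntegrableOn.intervalIntegrable_of_mem_Icc (hAz i).norm ha ht).symm
      _ ≤ ∫ s in a..t, g s * h s := intervalIntegral.integral_mono_on ht.1
          (IntegrableOn.intervalIntegrable_of_mem_Icc
            (integrable_finsetSum _ fun i _ => (hAz i).norm) ha ht)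
          ((hg.mul_continuousOn hh isCompact_Icc).intervalIntegrable_of_mem_Icc ha ht)
          fun s _ => sum_norm_mulVec_le (A s) (z s)
  have hh0 := eqOn_zero_of_le_integral_mul hg (fun s => by positivity) hh
    (fun t => by positivity) hle
  intro t ht
  funext i
  exact norm_eq_zero.1 <| le_antisymm ((Finset.single_le_sum (fun j _ => norm_nonneg (z t j))
    (Finset.mem_univ i)).trans_eq (hh0 ht)) (norm_nonneg _)

end LinearSystem

section SolutionSpace

variable {a b : ℝ} {m : ℕ} {A : ℝ → Matrix (Fin m) (Fin m) ℂ}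

def solutionSubmodule (hA : ∀ i j, IntegrableOn (fun s => A s i j) (Icc a b)) :
    Submodule ℂ (ℝ → Fin m → ℂ) where
  carrier := {y | (∀ i, ContinuousOn (fun t => y t i) (Icc a b)) ∧ Solves a b A 0 y}
  zero_mem' := ⟨fun _ => continuousOn_const, solves_zero_iff.2 fun _ _ _ => by simp⟩
  add_mem' := by
    rintro y z ⟨hyc, hy⟩ ⟨hzc, hz⟩
    refine ⟨fun i => (hyc i).add (hzc i), solves_zero_iff.2 fun t ht i => ?_⟩
    have ha : a ∈ Icc a b := ⟨le_rfl, ht.1.trans ht.2⟩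
    simp only [Pi.add_apply, Matrix.mulVec_add]
    rw [intervalIntegral.integral_add
      ((integrableOn_mulVec_apply hA hyc i).intervalIntegrable_of_mem_Icc ha ht)
      ((integrableOn_mulVec_apply hA hzc i).intervalIntegrable_of_mem_Icc ha ht),
      solves_zero_iff.1 hy t ht i, solves_zero_iff.1 hz t ht i]
    ring
  smul_mem' := by
    rintro c y ⟨hyc, hy⟩
    refine ⟨fun i => (hyc i).const_smul c, solves_zero_iff.2 fun t ht i => ?_⟩
    simp only [Pi.smul_apply, Matrix.mulVec_smul, smul_eq_mul,
      intervalIntegral.integral_const_mul]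
    rw [solves_zero_iff.1 hy t ht i]
    ring

theorem eqOn_of_mem_solutionSubmodule (hA : ∀ i j, IntegrableOn (fun s => A s i j) (Icc a b))
    {y z : ℝ → Fin m → ℂ} (hy : y ∈ solutionSubmodule hA) (hz : z ∈ solutionSubmodule hA)
    (hyz : y a = z a) : EqOn y z (Icc a b) := fun t ht => by
  obtain ⟨hc, hsol⟩ := (solutionSubmodule hA).sub_mem hy hz
  exact sub_eq_zero.1 (hsol.eqOn_zero hA hc (sub_eq_zero.2 hyz) ht)

end SolutionSpace

section FundamentalMatrix

variable {a b : ℝ} {m : ℕ}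

theorem fun_mulVec_eq_sum (Y : ℝ → Matrix (Fin m) (Fin m) ℂ) (c : Fin m → ℂ) :
    (fun t => Y t *ᵥ c) = ∑ j, c j • fun t k => Y t k j := by
  funext t k
  simp [Matrix.mulVec, dotProduct, Finset.sum_apply, mul_comm]

theorem IsFund.mulVec_mem_solutionSubmodule {A Y : ℝ → Matrix (Fin m) (Fin m) ℂ}
    (hA : ∀ i j, IntegrableOn (fun s => A s i j) (Icc a b))
    (hYc : ∀ i j, ContinuousOn (fun t => Y t i j) (Icc a b)) (hYf : IsFund a b A Y)
    (c : Fin m → ℂ) : (fun t => Y t *ᵥ c) ∈ solutionSubmodule hA := by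
  rw [fun_mulVec_eq_sum]
  refine Submodule.sum_mem _ fun j _ => Submodule.smul_mem _ _ ⟨fun k => hYc k j, ?_⟩
  refine solves_zero_iff.2 fun t ht k => ?_
  rw [hYf.2 t ht k j, hYf.1]
  rfl

theorem vMemW_mulVec {p : ℝ≥0∞} {n : ℕ} (hab : a < b) (hp : 1 ≤ p)
    {Y : ℝ → Matrix (Fin m) (Fin m) ℂ} (hY : MMemW p n a b Y) (c : Fin m → ℂ) :
    VMemW p n a b (fun t => Y t *ᵥ c) := by
  rw [fun_mulVec_eq_sum]
  exact Submodule.sum_mem (vMemWSubmodule p n hab hp m) fun j _ =>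
    Submodule.smul_mem _ _ fun k => hY k j

theorem charM_mulVec {p : ℝ≥0∞} {n : ℕ} {r : ℕ} {B : (ℝ → Fin m → ℂ) → (Fin r → ℂ)}
    (hB : IsBddLin p n a b B) (Y : ℝ → Matrix (Fin m) (Fin m) ℂ) (c : Fin m → ℂ) :
    charM B Y *ᵥ c = B (fun t => Y t *ᵥ c) := by
  calc charM B Y *ᵥ c = ∑ j, c j • B (fun t k => Y t k j) := by
        funext i
        simp [charM, Matrix.mulVec, dotProduct, mul_comm]
    _ = hB.toLinearMap (∑ j, c j • fun t k => Y t k j) := by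
        rw [map_sum]
        simp only [map_smul]
        rfl
    _ = B (fun t => Y t *ᵥ c) := by rw [fun_mulVec_eq_sum]; rfl

end FundamentalMatrix

theorem linearIndependent_restrict_mulVec {a b : ℝ} {m : ℕ} {ι : Type*}
    {Y : ℝ → Matrix (Fin m) (Fin m) ℂ} (ha : a ∈ Icc a b) (hYa : Y a = 1)
    {v : ι → Fin m → ℂ} (hv : LinearIndependent ℂ v) :
    LinearIndependent ℂ (fun i (t : Icc a b) => Y t *ᵥ v i) := by
  refine LinearIndependent.of_comp (LinearMap.proj (R := ℂ) (φ := fun _ : Icc a b => Fin m → ℂ)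
    ⟨a, ha⟩) ?_
  convert hv
  ext i k
  simp [hYa]

theorem kernel_dim_eq_charM_kernel_dim_general (a b : ℝ) (hab : a < b)
    (m r n : ℕ) (hn : 1 ≤ n) (p : ℝ≥0∞) (hp : 1 ≤ p)
    (A : ℝ → Matrix (Fin m) (Fin m) ℂ) (hA : MMemW p (n - 1) a b A)
    (B : (ℝ → Fin m → ℂ) → (Fin r → ℂ)) (hB : IsBddLin p n a b B)
    (Y : ℝ → Matrix (Fin m) (Fin m) ℂ) (hY : MMemW p n a b Y) (hYf : IsFund a b A Y) :
    KerDim p n a b A B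
      (Module.finrank ℂ (LinearMap.ker (Matrix.mulVecLin (charM B Y)))) := by
  have hn0 : n ≠ 0 := by omega
  have hAi : ∀ i j, IntegrableOn (fun s => A s i j) (Icc a b) := fun i j =>
    (hA i j).integrableOn hp
  have hYsol := hYf.mulVec_mem_solutionSubmodule hAi fun i j => (hY i j).continuousOn hn0
  set K := LinearMap.ker (charM B Y).mulVecLin
  let e := Module.finBasis ℂ K
  refine ⟨fun i t => Y t *ᵥ e i, fun i => ⟨vMemW_mulVec hab hp hY _, (hYsol _).2, ?_⟩,
    linearIndependent_restrict_mulVec (left_mem_Icc.2 hab.le) hYf.1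
      (e.linearIndependent.map' K.subtype K.ker_subtype), ?_⟩
  · rw [← charM_mulVec hB]
    exact (e i).2
  intro y hy hysol hBy
  have hyY : EqOn y (fun t => Y t *ᵥ y a) (Icc a b) :=
    eqOn_of_mem_solutionSubmodule hAi ⟨fun i => (hy i).continuousOn hn0, hysol⟩ (hYsol _)
      (by simp [hYf.1])
  have hyK : y a ∈ K := by
    rw [LinearMap.mem_ker, Matrix.mulVecLin_apply, charM_mulVec hB,
      ← hB.apply_eq_of_eqOn hab hp hy (vMemW_mulVec hab hp hY _) hyY, hBy]
  refine ⟨e.repr ⟨y a, hyK⟩, fun t ht => ?_⟩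
  have hya : ∑ i, e.repr ⟨y a, hyK⟩ i • (e i : Fin m → ℂ) = y a := by
    simpa only [Submodule.coe_sum, Submodule.coe_smul] using
      congrArg Subtype.val (e.sum_repr ⟨y a, hyK⟩)
  rw [show y t = Y t *ᵥ y a from hyY ht]
  conv_lhs => rw [← hya]
  simp [Matrix.mulVec_sum, Matrix.mulVec_smul]

/-- part of Theorem 2: the kernel of `(L,B)` has the same dimension as the
kernel of the characteristic matrix `M(L,B)`. -/
theorem kernel_dim_eq_charM_kernel_dim (a b : ℝ) (hab : a < b)
    (m r n : ℕ) (hm : 1 ≤ m) (hr : 1 ≤ r) (hn : 1 ≤ n) (p : ℝ≥0∞) (hp : 1 ≤ p)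
    (A : ℝ → Matrix (Fin m) (Fin m) ℂ) (hA : MMemW p (n - 1) a b A)
    (B : (ℝ → Fin m → ℂ) → (Fin r → ℂ)) (hB : IsBddLin p n a b B)
    (Y : ℝ → Matrix (Fin m) (Fin m) ℂ) (hY : MMemW p n a b Y) (hYf : IsFund a b A Y) :
    KerDim p n a b A B
      (Module.finrank ℂ (LinearMap.ker (Matrix.mulVecLin (charM B Y)))) :=
  kernel_dim_eq_charM_kernel_dim_general a b hab m r n hn p hp A hA B hB Y hY hYf
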